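/- arXiv:2304.09281 — 2 statements merged into one kernel-verified Lean document; each statement's English description precedes it below -/
import Mathlib

section
/- Let M be a d×d symmetric PSD matrix with ‖M‖_F ≤ 1, let S be an ℓ-dimensional subspace of ℝ^d on which x^T M x ≥ λ_ℓ(M)‖x‖² (guaranteed by Courant–Fischer using the top ℓ eigenvectors), and let G be a linear map such that ‖G M^{1/2} x‖² ≥ (1 − ε/λ_ℓ(M))‖M^{1/2} x‖² for all x ∈ S, where 0 < ε < λ_ℓ(M). Then λ_ℓ(M^{1/2} G^T G M^{1/2}) ≥ λ_ℓ(M) − ε. -/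
/-!
One direction of Courant–Fischer suffices: if `xᵀ N x ≥ c ‖x‖²` on an `(ℓ+1)`-dimensional
subspace, then `c ≤ λ_ℓ(N)`, because that subspace meets the span of the eigenvectors with
eigenvalue at most `λ_ℓ(N)` (a space of codimension at most `ℓ`) nontrivially. For
`N = M^{1/2} Gᵀ G M^{1/2}` one has `xᵀ N x = ‖G M^{1/2} x‖² ≥ (1 - ε/λ_ℓ(M)) xᵀ M x`, and on `S`
this is at least `(λ_ℓ(M) - ε) ‖x‖²`.
-/

open Matrix

/-- The `i`-th largest eigenvalue (0-indexed) of a Hermitian matrix. -/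
noncomputable def sortedEig {n : ℕ} {A : Matrix (Fin n) (Fin n) ℝ}
    (hA : A.IsHermitian) (i : Fin n) : ℝ :=
  (hA.eigenvalues ∘ Tuple.sort hA.eigenvalues) i.rev

open Finset

namespace OrthonormalBasis

variable {ι E : Type*} [Fintype ι] [NormedAddCommGroup E] [InnerProductSpace ℝ E]
  (b : OrthonormalBasis ι ℝ E) {T : E →ₗ[ℝ] E} {μ : ι → ℝ}

theorem repr_apply_of_apply_eq_smul (hT : ∀ i, T (b i) = μ i • b i) (x : E) (i : ι) :
    b.repr (T x) i = μ i * b.repr x i := by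
  classical
  conv_lhs => rw [← b.sum_repr x]
  simp [hT, smul_smul, mul_comm, Pi.single_apply]

theorem inner_apply_self_eq_sum (hT : ∀ i, T (b i) = μ i • b i) (x : E) :
    inner ℝ (T x) x = ∑ i, μ i * b.repr x i ^ 2 := by
  rw [← b.repr.inner_map_map, PiLp.inner_apply]
  refine Finset.sum_congr rfl fun i _ => ?_
  rw [b.repr_apply_of_apply_eq_smul hT, Real.inner_apply]
  ring

theorem norm_sq_eq_sum (x : E) : ‖x‖ ^ 2 = ∑ i, b.repr x i ^ 2 := by
  rw [← b.repr.norm_map, EuclideanSpace.norm_sq_eq]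
  simp

theorem inner_apply_self_le_of_repr_eq_zero (hT : ∀ i, T (b i) = μ i • b i) {c : ℝ} {x : E}
    (hx : ∀ i, c < μ i → b.repr x i = 0) : inner ℝ (T x) x ≤ c * ‖x‖ ^ 2 := by
  rw [b.inner_apply_self_eq_sum hT, b.norm_sq_eq_sum, Finset.mul_sum]
  refine Finset.sum_le_sum fun i _ => ?_
  rcases le_or_gt (μ i) c with hi | hi
  · exact mul_le_mul_of_nonneg_right hi (sq_nonneg _)
  · simp [hx i hi]

theorem exists_mem_ne_zero_inner_apply_self_le (hT : ∀ i, T (b i) = μ i • b i)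
    (S : Submodule ℝ E) (c : ℝ) (hS : #{i | c < μ i} < Module.finrank ℝ S) :
    ∃ x ∈ S, x ≠ 0 ∧ inner ℝ (T x) x ≤ c * ‖x‖ ^ 2 := by
  have : FiniteDimensional ℝ E := b.toBasis.finiteDimensional_of_finite
  let coeffs : S →ₗ[ℝ] ({i // c < μ i} → ℝ) :=
    LinearMap.pi (fun i => b.toBasis.coord i) ∘ₗ S.subtype
  have hrank : Module.finrank ℝ ({i // c < μ i} → ℝ) < Module.finrank ℝ S := by
    rwa [Module.finrank_fintype_fun_eq_card, Fintype.card_subtype]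
  obtain ⟨⟨x, hxS⟩, hx, hx0⟩ :=
    Submodule.exists_mem_ne_zero_of_ne_bot (LinearMap.ker_ne_bot_of_finrank_lt hrank)
  refine ⟨x, hxS, fun h => hx0 (by simp [h]),
    b.inner_apply_self_le_of_repr_eq_zero hT fun i hi => ?_⟩
  simpa [coeffs] using congr_fun (LinearMap.mem_ker (f := coeffs) |>.mp hx) ⟨i, hi⟩

end OrthonormalBasis

theorem Tuple.card_lt_apply_sort_le {α : Type*} [LinearOrder α] {n : ℕ} (f : Fin n → α)
    (k : Fin n) : #{i | f (Tuple.sort f k) < f i} ≤ n - 1 - k := by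
  rw [← Fin.card_Ioi]
  calc #{i | f (Tuple.sort f k) < f i}
      = #{j | f (Tuple.sort f k) < f (Tuple.sort f j)} :=
        Finset.card_equiv (Tuple.sort f).symm (by simp)
    _ ≤ #(Ioi k) := Finset.card_le_card fun j hj => by
        simp only [Finset.mem_filter_univ] at hj
        exact Finset.mem_Ioi.mpr (lt_of_not_ge fun hjk => hj.not_ge (Tuple.monotone_sort f hjk))

theorem le_sortedEig_of_forall_mem {d : ℕ} {N : Matrix (Fin d) (Fin d) ℝ} (hN : N.IsHermitian)
    (ℓ : Fin d) (S : Submodule ℝ (Fin d → ℝ)) (hS : (ℓ : ℕ) < Module.finrank ℝ S) {c : ℝ}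
    (h : ∀ x ∈ S, c * (x ⬝ᵥ x) ≤ x ⬝ᵥ N *ᵥ x) :
    c ≤ sortedEig hN ℓ := by
  by_contra! hlt
  let e : EuclideanSpace ℝ (Fin d) ≃ₗ[ℝ] (Fin d → ℝ) := WithLp.linearEquiv 2 ℝ _
  have hcard : #{i | sortedEig hN ℓ < hN.eigenvalues i} <
      Module.finrank ℝ (S.map e.symm.toLinearMap) := by
    rw [LinearEquiv.finrank_map_eq]
    have := Tuple.card_lt_apply_sort_le hN.eigenvalues ℓ.rev
    rw [Fin.val_rev] at this
    exact this.trans_lt (by omega)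
  have heig (i : Fin d) :
      toEuclideanLin N (hN.eigenvectorBasis i) = hN.eigenvalues i • hN.eigenvectorBasis i := by
    ext j
    simpa using congr_fun (hN.mulVec_eigenvectorBasis i) j
  obtain ⟨_, ⟨x, hxS, rfl⟩, hx0, hle⟩ :=
    hN.eigenvectorBasis.exists_mem_ne_zero_inner_apply_self_le heig _ _ hcard
  simp only [LinearEquiv.coe_coe] at hx0 hle
  have hnorm : ‖e.symm x‖ ^ 2 = x ⬝ᵥ x := by
    rw [← real_inner_self_eq_norm_sq]
    rfl
  have hinner : inner ℝ (toEuclideanLin N (e.symm x)) (e.symm x) = x ⬝ᵥ N *ᵥ x :=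
    (EuclideanSpace.inner_toLp_toLp _ _).trans (by rw [star_trivial]; rfl)
  have hpos : 0 < x ⬝ᵥ x := hnorm ▸ by positivity
  rw [hinner, hnorm] at hle
  exact (mul_lt_mul_of_pos_right hlt hpos).not_ge ((h x hxS).trans hle)

theorem Matrix.dotProduct_transpose_mul_self_mulVec {m n R : Type*} [Fintype m] [Fintype n]
    [CommSemiring R] (A : Matrix m n R) (x : n → R) :
    x ⬝ᵥ (Aᵀ * A) *ᵥ x = A *ᵥ x ⬝ᵥ A *ᵥ x := by
  rw [← mulVec_mulVec, dotProduct_mulVec, vecMul_transpose]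

theorem stmt_5_general {d k : ℕ} (M R : Matrix (Fin d) (Fin d) ℝ)
    (hM : M.PosSemidef) (hR : R.PosSemidef) (hRR : R * R = M)
    (ℓ : Fin d) (S : Submodule ℝ (Fin d → ℝ))
    (hdim : Module.finrank ℝ S = (ℓ : ℕ) + 1)
    (hS : ∀ x ∈ S, sortedEig hM.1 ℓ * (x ⬝ᵥ x) ≤ x ⬝ᵥ M.mulVec x)
    (G : Matrix (Fin k) (Fin d) ℝ) (ε : ℝ) (hε : 0 < ε) (hεlt : ε < sortedEig hM.1 ℓ)
    (hG : ∀ x ∈ S,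
      (1 - ε / sortedEig hM.1 ℓ) * (R.mulVec x ⬝ᵥ R.mulVec x)
        ≤ (G * R).mulVec x ⬝ᵥ (G * R).mulVec x)
    (h2 : (R * Gᵀ * G * R).IsHermitian) :
    sortedEig hM.1 ℓ - ε ≤ sortedEig h2 ℓ := by
  set lam := sortedEig hM.1 ℓ
  have hlam : 0 < lam := hε.trans hεlt
  have hRT : Rᵀ = R := (isHermitian_iff_isSymm.mp hR.isHermitian).eq
  have hM_eq : M = Rᵀ * R := by rw [hRT, hRR]
  have hN_eq : R * Gᵀ * G * R = (G * R)ᵀ * (G * R) := by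
    rw [transpose_mul, hRT, Matrix.mul_assoc]
  have hfactor : 0 ≤ 1 - ε / lam := sub_nonneg.mpr ((div_le_one hlam).mpr hεlt.le)
  refine le_sortedEig_of_forall_mem h2 ℓ S (by omega) fun x hx => ?_
  calc (lam - ε) * (x ⬝ᵥ x) = (1 - ε / lam) * (lam * (x ⬝ᵥ x)) := by field_simp
    _ ≤ (1 - ε / lam) * (x ⬝ᵥ M *ᵥ x) := mul_le_mul_of_nonneg_left (hS x hx) hfactor
    _ = (1 - ε / lam) * (R *ᵥ x ⬝ᵥ R *ᵥ x) := by
      rw [hM_eq, dotProduct_transpose_mul_self_mulVec]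
    _ ≤ (G * R) *ᵥ x ⬝ᵥ (G * R) *ᵥ x := hG x hx
    _ = x ⬝ᵥ (R * Gᵀ * G * R) *ᵥ x := by
      rw [hN_eq, dotProduct_transpose_mul_self_mulVec]

/-- Let `M` be `d×d` symmetric PSD with `‖M‖_F ≤ 1` and PSD square root `R`,
let `S` be an `(ℓ+1)`-dimensional subspace of `ℝ^d` (0-indexed `ℓ`) on which
`xᵀ M x ≥ λ_ℓ(M) ‖x‖²`, and let `G` satisfy `‖G M^{1/2} x‖² ≥ (1 − ε/λ_ℓ(M)) ‖M^{1/2} x‖²`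
for all `x ∈ S`, where `0 < ε < λ_ℓ(M)`. Then
`λ_ℓ(M^{1/2} Gᵀ G M^{1/2}) ≥ λ_ℓ(M) − ε`. -/
theorem stmt_5 {d k : ℕ} (M R : Matrix (Fin d) (Fin d) ℝ)
    (hM : M.PosSemidef) (hR : R.PosSemidef) (hRR : R * R = M)
    (hF : ∑ i, ∑ j, (M i j) ^ 2 ≤ 1)
    (ℓ : Fin d) (S : Submodule ℝ (Fin d → ℝ))
    (hdim : Module.finrank ℝ S = (ℓ : ℕ) + 1)
    (hS : ∀ x ∈ S, sortedEig hM.1 ℓ * (x ⬝ᵥ x) ≤ x ⬝ᵥ M.mulVec x)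
    (G : Matrix (Fin k) (Fin d) ℝ) (ε : ℝ) (hε : 0 < ε) (hεlt : ε < sortedEig hM.1 ℓ)
    (hG : ∀ x ∈ S,
      (1 - ε / sortedEig hM.1 ℓ) * (R.mulVec x ⬝ᵥ R.mulVec x)
        ≤ (G * R).mulVec x ⬝ᵥ (G * R).mulVec x)
    (h2 : (R * Gᵀ * G * R).IsHermitian) :
    sortedEig hM.1 ℓ - ε ≤ sortedEig h2 ℓ :=
  stmt_5_general M R hM hR hRR ℓ S hdim hS G ε hε hεlt hG h2
end

section
/- Let x = x₁ + x₂ with x₁ ⊥ x₂ be a unit vector, and let B₁, B₂ be matrices with disjoint row supports matching x₁, x₂ respectively (so B₁ x₂ = 0 and B₂ x₁ = 0). If ‖B₁^T B₁‖ ≤ α, ‖B₂^T B₂‖ ≤ β, and ‖B₁^T B₂‖ ≤ γ, then x^T (B₁ + B₂)^T (B₁ + B₂) x ≤ α‖x₁‖² + β‖x₂‖² + 2γ‖x₁‖‖x₂‖, which is bounded by the largest eigenvalue of the 2×2 matrix [[α, γ],[γ, β]]. -/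
/-!
Since `B₁ x₂ = 0` and `B₂ x₁ = 0`, `(B₁ + B₂) x = B₁ x₁ + B₂ x₂`, so the quadratic form splits into
`x₁ᵀ B₁ᵀB₁ x₁ + x₂ᵀ B₂ᵀB₂ x₂ + 2 x₁ᵀ B₁ᵀB₂ x₂`, and Cauchy–Schwarz bounds each term by the operator
norm times `‖x₁‖`, `‖x₂‖`. By orthogonality `(‖x₁‖, ‖x₂‖)` is a unit vector of `ℝ²`, and the bound
is the quadratic form of `[[α, γ], [γ, β]]` at it, hence at most its largest eigenvalue.
-/

open Matrix RealInnerProductSpace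

lemma Matrix.dotProduct_self_nonneg {R m : Type*} [Ring R] [LinearOrder R] [IsStrictOrderedRing R]
    [Fintype m] (v : m → R) : 0 ≤ v ⬝ᵥ v :=
  Finset.sum_nonneg fun i _ => mul_self_nonneg (v i)

section
variable {m : Type*} [Fintype m]

lemma norm_toLp_eq_sqrt_dotProduct (x : m → ℝ) : ‖WithLp.toLp 2 x‖ = √(x ⬝ᵥ x) := by
  rw [norm_eq_sqrt_real_inner, EuclideanSpace.inner_toLp_toLp, star_trivial, dotProduct_comm]

variable [DecidableEq m] {A : Matrix m m ℝ} {c : ℝ}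

lemma dotProduct_mulVec_le_of_norm_toEuclideanCLM_le
    (hA : ‖toEuclideanCLM (𝕜 := ℝ) (n := m) A‖ ≤ c) (x y : m → ℝ) :
    x ⬝ᵥ A *ᵥ y ≤ c * √(x ⬝ᵥ x) * √(y ⬝ᵥ y) := by
  set T := toEuclideanCLM (𝕜 := ℝ) (n := m) A
  calc x ⬝ᵥ A *ᵥ y = ⟪WithLp.toLp 2 x, T (WithLp.toLp 2 y)⟫ := (inner_toEuclideanCLM _ _ _).symm
    _ ≤ ‖WithLp.toLp 2 x‖ * (‖T‖ * ‖WithLp.toLp 2 y‖) :=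
      (real_inner_le_norm _ _).trans (by gcongr; exact T.le_opNorm _)
    _ ≤ ‖WithLp.toLp 2 x‖ * (c * ‖WithLp.toLp 2 y‖) := by gcongr
    _ = c * √(x ⬝ᵥ x) * √(y ⬝ᵥ y) := by
      rw [norm_toLp_eq_sqrt_dotProduct, norm_toLp_eq_sqrt_dotProduct]; ring

lemma dotProduct_mulVec_self_le_of_norm_toEuclideanCLM_le
    (hA : ‖toEuclideanCLM (𝕜 := ℝ) (n := m) A‖ ≤ c) (x : m → ℝ) :
    x ⬝ᵥ A *ᵥ x ≤ c * (x ⬝ᵥ x) := by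
  simpa [mul_assoc, Real.mul_self_sqrt (dotProduct_self_nonneg x)] using
    dotProduct_mulVec_le_of_norm_toEuclideanCLM_le hA x x

open MatrixOrder in
lemma Matrix.IsHermitian.dotProduct_mulVec_le_of_eigenvalues_le (hA : A.IsHermitian)
    (hc : ∀ i, hA.eigenvalues i ≤ c) (x : m → ℝ) :
    x ⬝ᵥ A *ᵥ x ≤ c * (x ⬝ᵥ x) := by
  have hle : A ≤ algebraMap ℝ _ c := by
    refine le_algebraMap_of_spectrum_le fun r hr => ?_
    obtain ⟨i, rfl⟩ := hA.spectrum_real_eq_range_eigenvalues ▸ hr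
    exact hc i
  simpa only [star_trivial, Algebra.algebraMap_eq_smul_one, sub_mulVec, smul_mulVec, one_mulVec,
    dotProduct_sub, dotProduct_smul, smul_eq_mul, sub_nonneg] using
    (Matrix.le_iff.mp hle).dotProduct_mulVec_nonneg x

end

lemma dotProduct_transpose_mul_mulVec {R k m : Type*} [CommSemiring R] [Fintype k] [Fintype m]
    (C D : Matrix k m R) (u v : m → R) : u ⬝ᵥ (Cᵀ * D) *ᵥ v = (C *ᵥ u) ⬝ᵥ (D *ᵥ v) := by
  rw [← mulVec_mulVec, dotProduct_mulVec, vecMul_transpose]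

lemma dotProduct_gram_add_mulVec_add {R k m : Type*} [CommRing R] [Fintype k] [Fintype m]
    {B₁ B₂ : Matrix k m R} {x₁ x₂ : m → R} (h₁ : B₁ *ᵥ x₂ = 0) (h₂ : B₂ *ᵥ x₁ = 0) :
    (x₁ + x₂) ⬝ᵥ ((B₁ + B₂)ᵀ * (B₁ + B₂)) *ᵥ (x₁ + x₂) =
      x₁ ⬝ᵥ (B₁ᵀ * B₁) *ᵥ x₁ + x₂ ⬝ᵥ (B₂ᵀ * B₂) *ᵥ x₂ + 2 * (x₁ ⬝ᵥ (B₁ᵀ * B₂) *ᵥ x₂) := by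
  have hsplit : (B₁ + B₂) *ᵥ (x₁ + x₂) = B₁ *ᵥ x₁ + B₂ *ᵥ x₂ := by
    simp [add_mulVec, mulVec_add, h₁, h₂]
  simp only [dotProduct_transpose_mul_mulVec, hsplit, add_dotProduct, dotProduct_add,
    dotProduct_comm (B₂ *ᵥ x₂) (B₁ *ᵥ x₁)]
  ring

/-- Let `x = x₁ + x₂` with `x₁ ⊥ x₂` be a unit vector, and let `B₁, B₂` have
disjoint row supports matching `x₁, x₂` (so `B₁ x₂ = 0`, `B₂ x₁ = 0`). If
`‖B₁ᵀ B₁‖ ≤ α`, `‖B₂ᵀ B₂‖ ≤ β`, `‖B₁ᵀ B₂‖ ≤ γ` (operator norms), then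
`xᵀ (B₁+B₂)ᵀ (B₁+B₂) x ≤ α‖x₁‖² + β‖x₂‖² + 2γ‖x₁‖‖x₂‖`, which is in turn bounded by the
largest eigenvalue of the 2×2 matrix `[[α, γ], [γ, β]]`. -/
theorem stmt_18 {n d : ℕ} (x₁ x₂ : Fin d → ℝ) (horth : x₁ ⬝ᵥ x₂ = 0)
    (hunit : (x₁ + x₂) ⬝ᵥ (x₁ + x₂) = 1)
    (B₁ B₂ : Matrix (Fin n) (Fin d) ℝ)
    (h₁ : B₁.mulVec x₂ = 0) (h₂ : B₂.mulVec x₁ = 0)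
    (α β γ : ℝ)
    (hα : ‖Matrix.toEuclideanCLM (𝕜 := ℝ) (n := Fin d) (B₁ᵀ * B₁)‖ ≤ α)
    (hβ : ‖Matrix.toEuclideanCLM (𝕜 := ℝ) (n := Fin d) (B₂ᵀ * B₂)‖ ≤ β)
    (hγ : ‖Matrix.toEuclideanCLM (𝕜 := ℝ) (n := Fin d) (B₁ᵀ * B₂)‖ ≤ γ)
    (h2x2 : (!![α, γ; γ, β]).IsHermitian) :
    (x₁ + x₂) ⬝ᵥ ((B₁ + B₂)ᵀ * (B₁ + B₂)).mulVec (x₁ + x₂)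
        ≤ α * (x₁ ⬝ᵥ x₁) + β * (x₂ ⬝ᵥ x₂) +
          2 * γ * Real.sqrt (x₁ ⬝ᵥ x₁) * Real.sqrt (x₂ ⬝ᵥ x₂) ∧
    α * (x₁ ⬝ᵥ x₁) + β * (x₂ ⬝ᵥ x₂) +
          2 * γ * Real.sqrt (x₁ ⬝ᵥ x₁) * Real.sqrt (x₂ ⬝ᵥ x₂)
        ≤ max (h2x2.eigenvalues 0) (h2x2.eigenvalues 1) := by
  constructor
  · rw [dotProduct_gram_add_mulVec_add h₁ h₂]
    have e₁ := dotProduct_mulVec_self_le_of_norm_toEuclideanCLM_le hα x₁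
    have e₂ := dotProduct_mulVec_self_le_of_norm_toEuclideanCLM_le hβ x₂
    have e₃ := dotProduct_mulVec_le_of_norm_toEuclideanCLM_le hγ x₁ x₂
    linarith
  · set a := √(x₁ ⬝ᵥ x₁)
    set b := √(x₂ ⬝ᵥ x₂)
    have ha : a * a = x₁ ⬝ᵥ x₁ := Real.mul_self_sqrt (dotProduct_self_nonneg x₁)
    have hb : b * b = x₂ ⬝ᵥ x₂ := Real.mul_self_sqrt (dotProduct_self_nonneg x₂)
    have hab : ![a, b] ⬝ᵥ ![a, b] = 1 := by
      rw [← hunit]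
      simp [add_dotProduct, dotProduct_add, dotProduct_comm x₂ x₁, horth, ← ha, ← hb]
    have hquad : ![a, b] ⬝ᵥ !![α, γ; γ, β] *ᵥ ![a, b] =
        α * (a * a) + β * (b * b) + 2 * γ * a * b := by
      simp [dotProduct, mulVec, Fin.sum_univ_two]; ring
    have hmax : ∀ i, h2x2.eigenvalues i ≤ max (h2x2.eigenvalues 0) (h2x2.eigenvalues 1) := by
      intro i; fin_cases i <;> simp
    have := h2x2.dotProduct_mulVec_le_of_eigenvalues_le hmax ![a, b]
    rwa [hquad, hab, mul_one, ha, hb] at this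
end
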